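/- arXiv:2512.05214 — 4 statements merged into one kernel-verified Lean document; each statement's English description precedes it below -/
import Mathlib

section
/- The upper approximation operator is invariant under taking the upper approximation of the relation: for all X ⊆ A and Y ⊆ O, overline-α_E(φ)(X,Y) = overline-α_E(overline(φ))(X,Y), where e ∈ overline-α_E(ψ)(X,Y) iff (overline(X) × overline(Y) × [e]) ∩ ψ ≠ ∅. -/
def cls {U : Type*} (θ : U → U → Prop) (z : U) : Set U := {y | θ z y}

def upperApprox {U : Type*} (θ : U → U → Prop) (X : Set U) : Set U :=
  {z | cls θ z ∩ X ≠ ∅}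

def lowerApprox {U : Type*} (θ : U → U → Prop) (X : Set U) : Set U :=
  {z | cls θ z ⊆ X}

def upperRel {A O E : Type*} (θA : A → A → Prop) (θO : O → O → Prop)
    (θE : E → E → Prop) (φ : Set (A × O × E)) : Set (A × O × E) :=
  {t | (cls θA t.1 ×ˢ (cls θO t.2.1 ×ˢ cls θE t.2.2)) ∩ φ ≠ ∅}

def lowerRel {A O E : Type*} (θA : A → A → Prop) (θO : O → O → Prop)
    (θE : E → E → Prop) (φ : Set (A × O × E)) : Set (A × O × E) :=
  {t | (cls θA t.1 ×ˢ (cls θO t.2.1 ×ˢ cls θE t.2.2)) ⊆ φ}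

def poss {A O E : Type*} (φ : Set (A × O × E)) (X : Set A) (Y : Set O) : Set E :=
  {e | (X ×ˢ (Y ×ˢ ({e} : Set E))) ∩ φ ≠ ∅}

def suff {A O E : Type*} (φ : Set (A × O × E)) (X : Set A) (Y : Set O) : Set E :=
  {e | (X ×ˢ (Y ×ˢ ({e} : Set E))) ⊆ φ}

def upperAlphaE {A O E : Type*} (θA : A → A → Prop) (θO : O → O → Prop)
    (θE : E → E → Prop) (ψ : Set (A × O × E)) (X : Set A) (Y : Set O) : Set E :=
  {e | (upperApprox θA X ×ˢ (upperApprox θO Y ×ˢ cls θE e)) ∩ ψ ≠ ∅}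

def lowerAlphaE {A O E : Type*} (θA : A → A → Prop) (θO : O → O → Prop)
    (θE : E → E → Prop) (ψ : Set (A × O × E)) (X : Set A) (Y : Set O) : Set E :=
  {e | (lowerApprox θA X ×ˢ (lowerApprox θO Y ×ˢ cls θE e)) ⊆ ψ}

variable {A O E : Type*} (θA : A → A → Prop) (θO : O → O → Prop) (θE : E → E → Prop)

theorem upperAlpha_invariant (hA : Equivalence θA) (hO : Equivalence θO)
    (hE : Equivalence θE) (φ : Set (A × O × E)) (X : Set A) (Y : Set O) :
    upperAlphaE θA θO θE φ X Y = upperAlphaE θA θO θE (upperRel θA θO θE φ) X Y := by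
  ext e
  simp only [upperAlphaE, Set.mem_setOf_eq, ← Set.nonempty_iff_ne_empty]
  constructor
  · rintro ⟨⟨a, o, e'⟩, hmem, hφ⟩
    exact ⟨(a, o, e'), hmem, Set.nonempty_iff_ne_empty.1 ⟨(a, o, e'),
      ⟨hA.refl a, hO.refl o, hE.refl e'⟩, hφ⟩⟩
  · rintro ⟨⟨a, o, e'⟩, ⟨haX, hoY, hee'⟩, hrel⟩
    obtain ⟨⟨a', o', e''⟩, ⟨haa', hoo', he'e''⟩, hφ⟩ := Set.nonempty_iff_ne_empty.2 hrel
    refine ⟨(a', o', e''), ⟨?_, ?_, hE.trans hee' he'e''⟩, hφ⟩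
    · obtain ⟨x, hx1, hx2⟩ := Set.nonempty_iff_ne_empty.2 haX
      exact Set.nonempty_iff_ne_empty.1 ⟨x, hA.trans (hA.symm haa') hx1, hx2⟩
    · obtain ⟨y, hy1, hy2⟩ := Set.nonempty_iff_ne_empty.2 hoY
      exact Set.nonempty_iff_ne_empty.1 ⟨y, hO.trans (hO.symm hoo') hy1, hy2⟩
end

section
/- The lower approximation operator is invariant under taking the lower approximation of the relation: for all X ⊆ A and Y ⊆ O, underline-α_E(φ)(X,Y) = underline-α_E(underline(φ))(X,Y), where e ∈ underline-α_E(ψ)(X,Y) iff underline(X) × underline(Y) × [e] ⊆ ψ. -/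
variable {A O E : Type*} (θA : A → A → Prop) (θO : O → O → Prop) (θE : E → E → Prop)

theorem lowerAlpha_invariant (hA : Equivalence θA) (hO : Equivalence θO)
    (hE : Equivalence θE) (φ : Set (A × O × E)) (X : Set A) (Y : Set O) :
    lowerAlphaE θA θO θE φ X Y = lowerAlphaE θA θO θE (lowerRel θA θO θE φ) X Y := by
  ext e
  simp only [lowerAlphaE, Set.mem_setOf_eq]
  constructor
  · intro h p hp
    obtain ⟨ha, ho, he⟩ := hp
    intro q hq
    obtain ⟨ha', ho', he'⟩ := hq
    refine h ⟨?_, ?_, ?_⟩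
    · intro z hz; exact ha (hA.trans ha' hz)
    · intro z hz; exact ho (hO.trans ho' hz)
    · exact hE.trans he he'
  · intro h p hp
    exact h hp ⟨hA.refl _, hO.refl _, hE.refl _⟩
end

section
/- The possibility operator applied to the upper approximation of φ coincides with the upper approximation operator: ⟨overline(φ)⟩_E(X,Y) = overline-α_E(φ)(X,Y) for all X ⊆ A, Y ⊆ O. -/
variable {A O E : Type*} (θA : A → A → Prop) (θO : O → O → Prop) (θE : E → E → Prop)

theorem poss_upperRel_eq_upperAlpha (hA : Equivalence θA) (hO : Equivalence θO)
    (hE : Equivalence θE) (φ : Set (A × O × E)) (X : Set A) (Y : Set O) :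
    poss (upperRel θA θO θE φ) X Y = upperAlphaE θA θO θE φ X Y := by
  ext e
  simp only [poss, upperRel, upperAlphaE, upperApprox, cls, Set.mem_setOf_eq,
    ← Set.nonempty_iff_ne_empty, Set.inter_nonempty, Set.mem_prod, Set.mem_singleton_iff]
  constructor
  · rintro ⟨⟨a, o, e1⟩, ⟨ha, ho, rfl⟩, ⟨a', o', e'⟩, ⟨h1, h2, h3⟩, hφ⟩
    exact ⟨⟨a', o', e'⟩, ⟨⟨⟨a, ⟨hA.symm h1, ha⟩⟩, ⟨o, ⟨hO.symm h2, ho⟩⟩, h3⟩, hφ⟩⟩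
  · rintro ⟨⟨a', o', e'⟩, ⟨⟨a, ha1, ha2⟩, ⟨o, ho1, ho2⟩, he⟩, hφ⟩
    exact ⟨⟨a, o, e⟩, ⟨ha2, ho2, rfl⟩, ⟨a', o', e'⟩, ⟨hA.symm ha1, hO.symm ho1, he⟩, hφ⟩
end

section
/- The possibility operator of the upper approximation of φ is invariant under upper-approximating its arguments: ⟨overline(φ)⟩_E(overline(X), overline(Y)) = ⟨overline(φ)⟩_E(X,Y) for all X ⊆ A, Y ⊆ O. -/
variable {A O E : Type*} (θA : A → A → Prop) (θO : O → O → Prop) (θE : E → E → Prop)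

theorem poss_upperRel_invariant (hA : Equivalence θA) (hO : Equivalence θO)
    (hE : Equivalence θE) (φ : Set (A × O × E)) (X : Set A) (Y : Set O) :
    poss (upperRel θA θO θE φ) (upperApprox θA X) (upperApprox θO Y) =
      poss (upperRel θA θO θE φ) X Y := by
  ext e
  simp only [poss, upperRel, Set.mem_setOf_eq, ← Set.nonempty_iff_ne_empty]
  constructor
  · rintro ⟨⟨a, o, e'⟩, ⟨ha, ho, he⟩, hrel⟩
    simp only [Set.mem_singleton_iff] at he
    subst he
    -- a ∈ upperApprox X, o ∈ upperApprox Y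
    obtain ⟨x, hxa, hxX⟩ := Set.nonempty_iff_ne_empty.mpr ha
    obtain ⟨y, hyo, hyY⟩ := Set.nonempty_iff_ne_empty.mpr ho
    obtain ⟨⟨a', o', e''⟩, ⟨ha', ho', he'⟩, hφ⟩ := hrel
    refine ⟨(x, y, e'), ⟨hxX, hyY, rfl⟩, ?_⟩
    exact ⟨(a', o', e''), ⟨hA.trans (hA.symm hxa) ha',
      hO.trans (hO.symm hyo) ho', he'⟩, hφ⟩
  · rintro ⟨⟨a, o, e'⟩, ⟨ha, ho, he⟩, hrel⟩
    refine ⟨(a, o, e'), ⟨?_, ?_, he⟩, hrel⟩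
    · exact Set.nonempty_iff_ne_empty.mp ⟨a, hA.refl a, ha⟩
    · exact Set.nonempty_iff_ne_empty.mp ⟨o, hO.refl o, ho⟩
end
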